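/- arXiv:1904.11958 — 7 statements merged into one kernel-verified Lean document; each statement's English description precedes it below -/
import Mathlib

section
/- Let p, q ∈ ℕ, a : Fin p → ℂ, b : Fin q → ℂ, z ∈ ℂ, and let N, n ∈ ℕ with n ≤ N. Suppose b_j + 1 + k ≠ 0 for every j and every natural number k < N. Then the truncated moment satisfies ∑_{x=0}^N φ_n(x)·(∏_i (a_i)_x / ∏_j (b_j + 1)_x)·z^x/x! = z^n · (∏_i (a_i)_n / ∏_j (b_j + 1)_n) · ∑_{x=0}^{N−n} (∏_i (a_i + n)_x / ∏_j (b_j + 1 + n)_x)·z^x/x!. -/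
/-!
Only the terms with `x ≥ n` survive, since `φ_n(x) = 0` for `x < n`. Writing `x = n + y`, one has
`φ_n(n + y) / (n + y)! = 1 / y!` and `(c)_{n+y} = (c)_n (c + n)_y`, so every surviving term
factors as `z^n (∏ (a_i)_n / ∏ (b_j+1)_n)` times the `y`-th term of the shifted series.
-/

open Finset

/-- The Pochhammer symbol `(c)_n = ∏_{j=0}^{n-1} (c + j)`. -/
noncomputable def poch (c : ℂ) (n : ℕ) : ℂ := ∏ j ∈ Finset.range n, (c + (j : ℂ))

/-- The falling factorial `φ_n(x) = ∏_{j=0}^{n-1} (x - j)`. -/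
noncomputable def fallFac (n : ℕ) (x : ℂ) : ℂ := ∏ j ∈ Finset.range n, (x - (j : ℂ))

open Nat

theorem Finset.sum_range_succ_eq_sum_range_shift {M : Type*} [AddCommMonoid M] {f : ℕ → M}
    {n N : ℕ} (hn : n ≤ N) (hf : ∀ x < n, f x = 0) :
    ∑ x ∈ range (N + 1), f x = ∑ y ∈ range (N - n + 1), f (n + y) := by
  rw [show N + 1 = n + (N - n + 1) by omega, sum_range_add,
    sum_eq_zero fun x hx ↦ hf x (mem_range.1 hx), zero_add]

lemma fallFac_natCast (n m : ℕ) : fallFac n (m : ℂ) = m.descFactorial n := by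
  rw [fallFac, ← descPochhammer_eval_eq_prod_range, descPochhammer_eval_eq_descFactorial]

lemma fallFac_natCast_of_lt {n x : ℕ} (h : x < n) : fallFac n (x : ℂ) = 0 := by
  rw [fallFac_natCast, descFactorial_eq_zero_iff_lt.2 h, Nat.cast_zero]

lemma fallFac_natCast_add_mul_factorial (n y : ℕ) :
    fallFac n ((n + y : ℕ) : ℂ) * (y ! : ℂ) = ((n + y) ! : ℂ) := by
  rw [fallFac_natCast, ← Nat.cast_mul, mul_comm, ← factorial_mul_descFactorial (le_add_right n y),
    Nat.add_sub_cancel_left]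

lemma poch_add (c : ℂ) (m n : ℕ) : poch c (m + n) = poch c m * poch (c + m) n := by
  simp only [poch, prod_range_add, Nat.cast_add, add_assoc]

lemma fallFac_mul_hypergeometric_term_shift {p q : ℕ} (a : Fin p → ℂ) (b : Fin q → ℂ) (z : ℂ)
    (n y : ℕ) :
    fallFac n ((n + y : ℕ) : ℂ) * ((∏ i, poch (a i) (n + y)) / (∏ j, poch (b j) (n + y))) *
        z ^ (n + y) / ((n + y) ! : ℂ)
      = z ^ n * ((∏ i, poch (a i) n) / (∏ j, poch (b j) n)) *
        ((∏ i, poch (a i + (n : ℂ)) y) / (∏ j, poch (b j + (n : ℂ)) y) * z ^ y / (y ! : ℂ)) := by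
  have hfac := fallFac_natCast_add_mul_factorial n y
  have hy : (y ! : ℂ) ≠ 0 := Nat.cast_ne_zero.2 (factorial_ne_zero y)
  have hny : ((n + y) ! : ℂ) ≠ 0 := Nat.cast_ne_zero.2 (factorial_ne_zero (n + y))
  simp only [poch_add, prod_mul_distrib, pow_add, mul_div_mul_comm]
  rw [div_eq_iff hny, ← hfac]
  field_simp

theorem truncated_moment_formula_general (p q : ℕ) (a : Fin p → ℂ) (b : Fin q → ℂ) (z : ℂ)
    (N n : ℕ) (hn : n ≤ N) :
    (∑ x ∈ Finset.range (N + 1),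
        fallFac n (x : ℂ) * ((∏ i, poch (a i) x) / (∏ j, poch (b j + 1) x)) * z ^ x /
          (x.factorial : ℂ))
      = z ^ n * ((∏ i, poch (a i) n) / (∏ j, poch (b j + 1) n)) *
        ∑ x ∈ Finset.range (N - n + 1),
          ((∏ i, poch (a i + (n : ℂ)) x) / (∏ j, poch (b j + 1 + (n : ℂ)) x)) * z ^ x /
            (x.factorial : ℂ) := by
  rw [sum_range_succ_eq_sum_range_shift hn fun x hx ↦ by simp [fallFac_natCast_of_lt hx], mul_sum]
  exact sum_congr rfl fun y _ ↦ fallFac_mul_hypergeometric_term_shift a (fun j ↦ b j + 1) z n y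

/-- the `n`-th truncated moment satisfies
`∑_{x=0}^N φ_n(x) (∏ (a_i)_x / ∏ (b_j+1)_x) z^x/x!
 = z^n (∏ (a_i)_n / ∏ (b_j+1)_n) ∑_{x=0}^{N-n} (∏ (a_i+n)_x / ∏ (b_j+1+n)_x) z^x/x!`. -/
theorem truncated_moment_formula (p q : ℕ) (a : Fin p → ℂ) (b : Fin q → ℂ) (z : ℂ)
    (N n : ℕ) (hn : n ≤ N)
    (hb : ∀ (j : Fin q) (k : ℕ), k < N → b j + 1 + (k : ℂ) ≠ 0) :
    (∑ x ∈ Finset.range (N + 1),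
        fallFac n (x : ℂ) * ((∏ i, poch (a i) x) / (∏ j, poch (b j + 1) x)) * z ^ x /
          (x.factorial : ℂ))
      = z ^ n * ((∏ i, poch (a i) n) / (∏ j, poch (b j + 1) n)) *
        ∑ x ∈ Finset.range (N - n + 1),
          ((∏ i, poch (a i + (n : ℂ)) x) / (∏ j, poch (b j + 1 + (n : ℂ)) x)) * z ^ x /
            (x.factorial : ℂ) :=
  truncated_moment_formula_general p q a b z N n hn
end

section
/- Let z ∈ ℂ and let t ∈ ℂ satisfy t ≠ x and t + 1 ≠ x for every x ∈ ℕ. Then the Stieltjes transform S(t) = ∑_{x=0}^∞ (z^x/x!)·1/(t − x) of the Charlier weight satisfies the difference equation (t + 1)·S(t + 1) − z·S(t) = e^z. -/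
/-!
The Charlier weight `w x = z ^ x / x!` satisfies the Pearson relation `(n + 1) w (n + 1) = z w n`.
Writing `t + 1 = (t + 1 - x) + x` in the `x`-th term of `(t + 1) S(t + 1)` splits it into
`∑ w x = exp z` plus `∑ x w x / (t + 1 - x)`; after the shift `x = n + 1` the Pearson relation
turns the latter series into `z S(t)`.
-/
open Filter Topology Asymptotics

section StieltjesTransform

variable {𝕜 : Type*} [RCLike 𝕜]

noncomputable def stieltjesTransform (w : ℕ → 𝕜) (t : 𝕜) : 𝕜 := ∑' x : ℕ, w x * (1 / (t - x))

theorem tendsto_one_div_sub_natCast_atTop (t : 𝕜) :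
    Tendsto (fun x : ℕ => 1 / (t - x)) atTop (𝓝 0) := by
  simpa only [one_div, Function.comp_def] using tendsto_inv₀_cobounded.comp
    ((tendsto_const_sub_cobounded t).comp tendsto_natCast_atTop_cobounded)

theorem summable_stieltjesTransform {w : ℕ → 𝕜} (hw : Summable (‖w ·‖)) (t : 𝕜) :
    Summable fun x : ℕ => w x * (1 / (t - x)) := by
  refine summable_of_isBigO_nat hw ?_
  simpa using (isBigO_norm_right.mpr (isBigO_refl w atTop)).mul
    ((tendsto_one_div_sub_natCast_atTop t).isBigO_one ℝ)

theorem stieltjesTransform_add_one {w : ℕ → 𝕜} {z m t : 𝕜} (hw : HasSum w m)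
    (hrec : ∀ n : ℕ, (n + 1 : 𝕜) * w (n + 1) = z * w n)
    (hS : Summable fun x : ℕ => w x * (1 / (t - x))) (ht1 : ∀ x : ℕ, t + 1 ≠ x) :
    (t + 1) * stieltjesTransform w (t + 1) - z * stieltjesTransform w t = m := by
  have hshift :
      HasSum (fun x : ℕ => x * w x * (1 / (t + 1 - x))) (z * stieltjesTransform w t) := by
    have hterm (n : ℕ) : ((n + 1 : ℕ) : 𝕜) * w (n + 1) * (1 / (t + 1 - (n + 1 : ℕ))) =
        z * (w n * (1 / (t - n))) := by
      push_cast
      rw [hrec n, add_sub_add_right_eq_sub]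
      ring
    have hsucc : HasSum (fun n : ℕ => ((n + 1 : ℕ) : 𝕜) * w (n + 1) * (1 / (t + 1 - (n + 1 : ℕ))))
        (z * stieltjesTransform w t) := by
      simpa only [hterm, stieltjesTransform] using hS.hasSum.mul_left z
    simpa only [Finset.sum_range_one, Nat.cast_zero, zero_mul, add_zero] using
      (hasSum_nat_add_iff (f := fun x : ℕ => x * w x * (1 / (t + 1 - x))) 1).mp hsucc
  have hsplit (x : ℕ) :
      (t + 1) * (w x * (1 / (t + 1 - x))) = w x + x * w x * (1 / (t + 1 - x)) := by
    have := sub_ne_zero.mpr (ht1 x)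
    field_simp
    ring
  have hsum : HasSum (fun x : ℕ => (t + 1) * (w x * (1 / (t + 1 - x))))
      (m + z * stieltjesTransform w t) := by
    simpa only [hsplit] using hw.add hshift
  rw [stieltjesTransform, ← tsum_mul_left, hsum.tsum_eq]
  ring

end StieltjesTransform

noncomputable def charlierWeight (z : ℂ) (x : ℕ) : ℂ := z ^ x / x.factorial

theorem hasSum_charlierWeight (z : ℂ) : HasSum (charlierWeight z) (Complex.exp z) := by
  rw [Complex.exp_eq_exp_ℂ]
  exact NormedSpace.expSeries_div_hasSum_exp z

theorem summable_norm_charlierWeight (z : ℂ) : Summable (‖charlierWeight z ·‖) := by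
  simpa only [charlierWeight, norm_div, norm_pow, Complex.norm_natCast] using
    Real.summable_pow_div_factorial ‖z‖

theorem succ_mul_charlierWeight_succ (z : ℂ) (n : ℕ) :
    (n + 1 : ℂ) * charlierWeight z (n + 1) = z * charlierWeight z n := by
  rw [charlierWeight, charlierWeight, Nat.factorial_succ, Nat.cast_mul, pow_succ']
  push_cast
  field_simp

theorem charlier_stieltjes_general (z t : ℂ)
    (ht1 : ∀ x : ℕ, t + 1 ≠ (x : ℂ)) :
    (t + 1) * (∑' x : ℕ, z ^ x / (x.factorial : ℂ) * (1 / (t + 1 - (x : ℂ))))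
      - z * (∑' x : ℕ, z ^ x / (x.factorial : ℂ) * (1 / (t - (x : ℂ))))
      = Complex.exp z :=
  stieltjesTransform_add_one (hasSum_charlierWeight z) (succ_mul_charlierWeight_succ z)
    (summable_stieltjesTransform (summable_norm_charlierWeight z) t) ht1

/-- the Stieltjes transform `S(t) = ∑_{x≥0} (z^x/x!)/(t-x)` of the Charlier
weight satisfies `(t+1) S(t+1) - z S(t) = e^z`. -/
theorem charlier_stieltjes (z t : ℂ)
    (ht : ∀ x : ℕ, t ≠ (x : ℂ)) (ht1 : ∀ x : ℕ, t + 1 ≠ (x : ℂ)) :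
    (t + 1) * (∑' x : ℕ, z ^ x / (x.factorial : ℂ) * (1 / (t + 1 - (x : ℂ))))
      - z * (∑' x : ℕ, z ^ x / (x.factorial : ℂ) * (1 / (t - (x : ℂ))))
      = Complex.exp z :=
  charlier_stieltjes_general z t ht1
end

section
/- Let N, n ∈ ℕ with n ≤ N and let z ∈ ℂ. Then the n-th Krawtchouk moment satisfies ∑_{x=0}^N φ_n(x)·(−N)_x·z^x/x! = z^n·(−N)_n·(1 − z)^{N−n}, where (−N)_x = ∏_{j=0}^{x-1}(−N + j) and (1 − z)^{N−n} is an ordinary natural-number power. -/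
/-!
Since `(-N)_x / x! = (-1)^x C(N, x)` and `φ_n(x) C(N, x) = φ_n(N) C(N - n, x - n)`, the moment is
`φ_n(N) ∑_{k} C(N - n, k) (-z)^(n + k)`, which the binomial theorem sums to
`(-z)^n φ_n(N) (1 - z)^(N - n) = z^n (-N)_n (1 - z)^(N - n)`.
-/

open Finset

lemma fallFac_natCast_s11 (n x : ℕ) : fallFac n x = x.descFactorial n := by
  rw [fallFac, ← descPochhammer_eval_eq_prod_range, descPochhammer_eval_eq_descFactorial]

lemma poch_neg (c : ℂ) (n : ℕ) : poch (-c) n = (-1) ^ n * fallFac n c := by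
  have factor (j : ℕ) : -c + j = -1 * (c - j) := by ring
  simp only [poch, fallFac, factor, prod_mul_distrib, prod_const, card_range]

lemma poch_neg_natCast_div_factorial (N x : ℕ) :
    poch (-(N : ℂ)) x / x.factorial = (-1) ^ x * N.choose x := by
  rw [poch_neg, fallFac_natCast_s11, Nat.descFactorial_eq_factorial_mul_choose, Nat.cast_mul,
    mul_comm (x.factorial : ℂ), ← mul_assoc,
    mul_div_cancel_right₀ _ (Nat.cast_ne_zero.mpr x.factorial_ne_zero)]

lemma Nat.descFactorial_add_mul_choose (N n k : ℕ) :
    (n + k).descFactorial n * N.choose (n + k) = N.descFactorial n * (N - n).choose k := by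
  rw [Nat.descFactorial_eq_factorial_mul_choose, Nat.descFactorial_eq_factorial_mul_choose,
    mul_assoc, mul_comm ((n + k).choose n), Nat.choose_mul (Nat.le_add_right n k),
    Nat.add_sub_cancel_left, mul_assoc]

lemma sum_descFactorial_mul_choose_mul_pow {R : Type*} [CommSemiring R] (N n : ℕ) (w : R) :
    ∑ x ∈ range (N + 1), (x.descFactorial n * N.choose x : R) * w ^ x
      = N.descFactorial n * w ^ n * (w + 1) ^ (N - n) := by
  have vanish_below {x : ℕ} (hx : x < n) : (x.descFactorial n * N.choose x : R) * w ^ x = 0 := by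
    rw [Nat.descFactorial_eq_zero_iff_lt.mpr hx, Nat.cast_zero, zero_mul, zero_mul]
  rcases lt_or_ge N n with hNn | hn
  · rw [Nat.descFactorial_eq_zero_iff_lt.mpr hNn, Nat.cast_zero, zero_mul, zero_mul]
    exact sum_eq_zero fun x hx => vanish_below ((mem_range.mp hx).trans_le hNn)
  have below_n : ∑ x ∈ range n, (x.descFactorial n * N.choose x : R) * w ^ x = 0 :=
    sum_eq_zero fun x hx => vanish_below (mem_range.mp hx)
  rw [show N + 1 = n + (N - n + 1) by omega, sum_range_add, below_n, zero_add, add_pow,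
    mul_sum]
  refine sum_congr rfl fun k _ => ?_
  rw [← Nat.cast_mul, Nat.descFactorial_add_mul_choose, Nat.cast_mul, one_pow, mul_one, pow_add]
  ring

theorem krawtchouk_moment_general (N n : ℕ) (z : ℂ) :
    (∑ x ∈ Finset.range (N + 1),
        fallFac n (x : ℂ) * poch (-(N : ℂ)) x * z ^ x / (x.factorial : ℂ))
      = z ^ n * poch (-(N : ℂ)) n * (1 - z) ^ (N - n) := by
  have term (x : ℕ) : fallFac n (x : ℂ) * poch (-(N : ℂ)) x * z ^ x / (x.factorial : ℂ)
      = (x.descFactorial n * N.choose x : ℂ) * (-z) ^ x := by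
    rw [mul_div_right_comm, mul_assoc, mul_div_assoc, poch_neg_natCast_div_factorial,
      fallFac_natCast_s11, neg_pow]
    ring
  simp_rw [term]
  rw [sum_descFactorial_mul_choose_mul_pow, poch_neg, fallFac_natCast_s11, neg_pow,
    neg_add_eq_sub]
  ring

/-- the `n`-th Krawtchouk moment:
`∑_{x=0}^N φ_n(x) (-N)_x z^x/x! = z^n (-N)_n (1-z)^{N-n}`. -/
theorem krawtchouk_moment (N n : ℕ) (hn : n ≤ N) (z : ℂ) :
    (∑ x ∈ Finset.range (N + 1),
        fallFac n (x : ℂ) * poch (-(N : ℂ)) x * z ^ x / (x.factorial : ℂ))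
      = z ^ n * poch (-(N : ℂ)) n * (1 - z) ^ (N - n) :=
  krawtchouk_moment_general N n z
end

section
/- Let a, b ∈ ℂ, N ∈ ℕ, and suppose b + 1 + k ≠ 0 for every natural number k < N. Let t ∈ ℂ satisfy t ≠ x and t + 1 ≠ x for every natural number x ≤ N. Then the Stieltjes transform S(t) = ∑_{x=0}^N ((a)_x·(−N)_x/((b + 1)_x·x!))·1/(t − x) of the Hahn weight satisfies (t + 1)·(t + b + 1)·S(t + 1) − (t − N)·(t + a)·S(t) = (b + 1 − a + N)·ν₀, where ν₀ = ∑_{x=0}^N (a)_x·(−N)_x/((b + 1)_x·x!). -/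
/-!
The Hahn weight `w` satisfies the Pearson equation `(x - N)(x + a) w(x) = (x + 1)(x + b + 1) w(x + 1)`
on `{0, …, N}`, with `w(N + 1) = 0`. Dividing `(t + 1)(t + b + 1)` by `t + 1 - x` and `(t - N)(t + a)`
by `t - x` leaves the constant `b + 1 - a + N` plus the remainders `x(x + b)/(t + 1 - x)` and
`(x - N)(x + a)/(t - x)`. Weighted by `w`, the Pearson equation turns the second remainder into the
first one shifted by one, so their sums telescope away.
-/

open Finset

lemma poch_succ (c : ℂ) (n : ℕ) : poch c (n + 1) = poch c n * (c + n) :=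
  prod_range_succ _ _

lemma poch_ne_zero {c : ℂ} {n : ℕ} (h : ∀ j < n, c + j ≠ 0) : poch c n ≠ 0 :=
  prod_ne_zero_iff.mpr fun j hj => h j (mem_range.mp hj)

lemma poch_neg_natCast_succ_self (N : ℕ) : poch (-(N : ℂ)) (N + 1) = 0 :=
  prod_eq_zero (self_mem_range_succ N) (neg_add_cancel _)

noncomputable def hahnWeight (a b : ℂ) (N x : ℕ) : ℂ :=
  poch a x * poch (-(N : ℂ)) x / (poch (b + 1) x * (x.factorial : ℂ))

section HahnWeight

variable {a b : ℂ} {N : ℕ}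

lemma hahnWeight_succ_self : hahnWeight a b N (N + 1) = 0 := by
  simp [hahnWeight, poch_neg_natCast_succ_self]

theorem hahnWeight_pearson (hb : ∀ k < N, b + 1 + (k : ℂ) ≠ 0) {x : ℕ} (hx : x ≤ N) :
    ((x : ℂ) - N) * (x + a) * hahnWeight a b N x
      = ((x : ℂ) + 1) * (x + b + 1) * hahnWeight a b N (x + 1) := by
  obtain rfl | hxN := hx.eq_or_lt
  · rw [hahnWeight_succ_self]
    ring
  have hpoch : poch (b + 1) x ≠ 0 := poch_ne_zero fun j hj => hb j (hj.trans hxN)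
  have hbx : b + 1 + (x : ℂ) ≠ 0 := hb x hxN
  have hfact : (x.factorial : ℂ) ≠ 0 := Nat.cast_ne_zero.mpr x.factorial_ne_zero
  have hx1 : (x : ℂ) + 1 ≠ 0 := Nat.cast_add_one_ne_zero x
  simp only [hahnWeight, poch_succ, Nat.factorial_succ, Nat.cast_mul, Nat.cast_add, Nat.cast_one]
  field_simp
  ring

theorem sum_hahnWeight_mul_shift (hb : ∀ k < N, b + 1 + (k : ℂ) ≠ 0) (t : ℂ) :
    ∑ x ∈ range (N + 1), hahnWeight a b N x * ((x : ℂ) * (x + b) / (t + 1 - x))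
      = ∑ x ∈ range (N + 1), hahnWeight a b N x * (((x : ℂ) - N) * (x + a) / (t - x)) := by
  set G : ℕ → ℂ := fun y => hahnWeight a b N y * ((y : ℂ) * (y + b) / (t + 1 - y))
  have hshift : ∀ x ∈ range (N + 1),
      hahnWeight a b N x * (((x : ℂ) - N) * (x + a) / (t - x)) = G (x + 1) := by
    intro x hx
    have hpearson := hahnWeight_pearson (a := a) hb (Nat.lt_succ_iff.mp (mem_range.mp hx))
    simp only [G, Nat.cast_add, Nat.cast_one, add_sub_add_right_eq_sub]
    rw [mul_div_assoc', mul_div_assoc', mul_comm, hpearson]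
    ring
  rw [sum_congr rfl hshift, eq_comm, ← sub_eq_zero, ← sum_sub_distrib]
  exact (sum_range_sub G (N + 1)).trans (by simp [G, hahnWeight_succ_self])

end HahnWeight

lemma div_sub_div_eq_const_add_remainders {K : Type*} [Field K] (a b n t x : K)
    (h₁ : t + 1 - x ≠ 0) (h₀ : t - x ≠ 0) :
    (t + 1) * (t + b + 1) / (t + 1 - x) - (t - n) * (t + a) / (t - x)
      = (b + 1 - a + n) + (x * (x + b) / (t + 1 - x) - (x - n) * (x + a) / (t - x)) := by
  field_simp
  ring

/-- the Stieltjes transform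
`S(t) = ∑_{x=0}^N ((a)_x (-N)_x / ((b+1)_x x!)) / (t-x)` of the Hahn weight satisfies
`(t+1)(t+b+1) S(t+1) - (t-N)(t+a) S(t) = (b+1-a+N) ν₀`. -/
theorem hahn_stieltjes (a b : ℂ) (N : ℕ)
    (hb : ∀ k : ℕ, k < N → b + 1 + (k : ℂ) ≠ 0)
    (t : ℂ) (ht : ∀ x : ℕ, x ≤ N → t ≠ (x : ℂ)) (ht1 : ∀ x : ℕ, x ≤ N → t + 1 ≠ (x : ℂ)) :
    (t + 1) * (t + b + 1) * (∑ x ∈ Finset.range (N + 1),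
        poch a x * poch (-(N : ℂ)) x / (poch (b + 1) x * (x.factorial : ℂ)) *
          (1 / (t + 1 - (x : ℂ))))
      - (t - (N : ℂ)) * (t + a) * (∑ x ∈ Finset.range (N + 1),
        poch a x * poch (-(N : ℂ)) x / (poch (b + 1) x * (x.factorial : ℂ)) *
          (1 / (t - (x : ℂ))))
      = (b + 1 - a + (N : ℂ)) * ∑ x ∈ Finset.range (N + 1),
          poch a x * poch (-(N : ℂ)) x / (poch (b + 1) x * (x.factorial : ℂ)) := by
  set w := hahnWeight a b N
  have hpointwise : ∀ x ∈ range (N + 1),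
      (t + 1) * (t + b + 1) * (w x * (1 / (t + 1 - x))) - (t - N) * (t + a) * (w x * (1 / (t - x)))
        = (b + 1 - a + N) * w x + (w x * ((x : ℂ) * (x + b) / (t + 1 - x))
          - w x * (((x : ℂ) - N) * (x + a) / (t - x))) := by
    intro x hx
    have hxN := Nat.lt_succ_iff.mp (mem_range.mp hx)
    linear_combination w x * div_sub_div_eq_const_add_remainders a b (N : ℂ) t x
      (sub_ne_zero.mpr (ht1 x hxN)) (sub_ne_zero.mpr (ht x hxN))
  calc (t + 1) * (t + b + 1) * ∑ x ∈ range (N + 1), w x * (1 / (t + 1 - x))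
        - (t - N) * (t + a) * ∑ x ∈ range (N + 1), w x * (1 / (t - x))
      = ∑ x ∈ range (N + 1), ((t + 1) * (t + b + 1) * (w x * (1 / (t + 1 - x)))
          - (t - N) * (t + a) * (w x * (1 / (t - x)))) := by
        rw [mul_sum, mul_sum, ← sum_sub_distrib]
    _ = (b + 1 - a + N) * ∑ x ∈ range (N + 1), w x := by
        rw [sum_congr rfl hpointwise, sum_add_distrib, sum_sub_distrib,
          sum_hahnWeight_mul_shift hb, sub_self, add_zero, mul_sum]
end

section
/- Let m, n ∈ ℕ with n ≤ 2m. Then the n-th moment of the symmetrized Charlier weight satisfies ∑_{x=0}^{2m} φ_n(x)·(−2m)_x·(−1)^x/x! = (−1)^n·(−2m)_n·2^{2m−n}. -/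
/-!
With `N = 2m`, the weight `(-N)_x (-1)^x / x!` is the binomial coefficient `C(N, x)` and
`(-1)^n (-N)_n = φ_n(N)`, so the identity reads `∑ₓ C(N, x) φ_n(x) = φ_n(N) 2^(N-n)`. Both sides are
the value at `X = 1` of the `n`-th derivative of `(X + 1)^N`, expanded by the binomial theorem on the
left and differentiated directly on the right.
-/

open Finset

open Polynomial in
theorem Nat.sum_choose_mul_descFactorial (N n : ℕ) :
    ∑ x ∈ range (N + 1), N.choose x * x.descFactorial n = N.descFactorial n * 2 ^ (N - n) := by
  have h := congrArg (eval 1) (iterate_derivative_X_add_pow (R := ℕ) N n 1)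
  rw [add_pow] at h
  simpa [iterate_derivative_sum, iterate_derivative_X_pow_eq_natCast_mul, eval_finsetSum,
    mul_comm, one_add_one_eq_two] using h

lemma fallFac_natCast_s15 (n N : ℕ) : fallFac n N = N.descFactorial n := by
  rw [fallFac, ← descPochhammer_eval_eq_prod_range, descPochhammer_eval_eq_descFactorial]

lemma poch_neg_natCast_mul_neg_one_pow (N n : ℕ) :
    poch (-N) n * (-1) ^ n = N.descFactorial n := by
  rw [poch_neg, fallFac_natCast_s15, mul_right_comm, ← pow_add, Even.neg_one_pow ⟨n, rfl⟩, one_mul]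

lemma poch_neg_natCast_mul_neg_one_pow_div_factorial (N x : ℕ) :
    poch (-N) x * (-1) ^ x / x.factorial = N.choose x := by
  rw [poch_neg_natCast_mul_neg_one_pow, Nat.descFactorial_eq_factorial_mul_choose, Nat.cast_mul,
    mul_div_cancel_left₀ _ (Nat.cast_ne_zero.2 x.factorial_ne_zero)]

theorem sum_fallFac_mul_poch_neg_natCast (N n : ℕ) :
    ∑ x ∈ range (N + 1), fallFac n x * poch (-N) x * (-1) ^ x / x.factorial
      = N.descFactorial n * 2 ^ (N - n) := by
  have hterm (x : ℕ) : fallFac n x * poch (-N) x * (-1) ^ x / x.factorial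
      = (N.choose x * x.descFactorial n : ℕ) := by
    rw [mul_assoc, mul_div_assoc, poch_neg_natCast_mul_neg_one_pow_div_factorial, fallFac_natCast_s15,
      mul_comm, Nat.cast_mul]
  simp_rw [hterm]
  exact_mod_cast Nat.sum_choose_mul_descFactorial N n

theorem symmetrized_charlier_moment_general (m n : ℕ) :
    (∑ x ∈ Finset.range (2 * m + 1),
        fallFac n (x : ℂ) * poch (-(2 * m : ℂ)) x * (-1 : ℂ) ^ x / (x.factorial : ℂ))
      = (-1 : ℂ) ^ n * poch (-(2 * m : ℂ)) n * 2 ^ (2 * m - n) := by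
  have h2m : (2 * m : ℂ) = ((2 * m : ℕ) : ℂ) := by push_cast; rfl
  rw [h2m, sum_fallFac_mul_poch_neg_natCast, mul_comm ((-1 : ℂ) ^ n),
    poch_neg_natCast_mul_neg_one_pow]

/-- the `n`-th moment of the symmetrized Charlier weight:
`∑_{x=0}^{2m} φ_n(x) (-2m)_x (-1)^x/x! = (-1)^n (-2m)_n 2^{2m-n}`. -/
theorem symmetrized_charlier_moment (m n : ℕ) (hn : n ≤ 2 * m) :
    (∑ x ∈ Finset.range (2 * m + 1),
        fallFac n (x : ℂ) * poch (-(2 * m : ℂ)) x * (-1 : ℂ) ^ x / (x.factorial : ℂ))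
      = (-1 : ℂ) ^ n * poch (-(2 * m : ℂ)) n * 2 ^ (2 * m - n) :=
  symmetrized_charlier_moment_general m n
end

section
/- Let z, ω ∈ ℂ and n ∈ ℕ. Then the n-th moment of the Christoffel-transformed Charlier weight satisfies ∑_{x=0}^∞ (x − ω)·φ_n(x)·z^x/x! = (n + z − ω)·z^n·e^z. -/
/-!
On the naturals `φ_n(x) = x! / (x - n)!` (and `0` for `x < n`), so the Poisson-type series
`∑ φ_n(x) z^x / x!` is the exponential series shifted by `n`, i.e. `z^n e^z`. Since
`(x - ω) φ_n(x) = φ_{n+1}(x) + (n - ω) φ_n(x)`, the Christoffel moment is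
`z^{n+1} e^z + (n - ω) z^n e^z`.
-/

open Finset
open scoped Nat

lemma fallFac_succ (n : ℕ) (x : ℂ) : fallFac (n + 1) x = fallFac n x * (x - n) :=
  prod_range_succ _ n

lemma fallFac_natCast_s16 (n k : ℕ) : fallFac n (k : ℂ) = k.descFactorial n := by
  rw [fallFac, ← descPochhammer_eval_eq_prod_range, descPochhammer_eval_eq_descFactorial]

lemma descFactorial_mul_pow_div_factorial_add {K : Type*} [Field K] [CharZero K] (z : K)
    (n k : ℕ) :
    ((k + n).descFactorial n : K) * z ^ (k + n) / (k + n)! = z ^ n * (z ^ k / k !) := by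
  have hfac : ((k + n)! : K) = k ! * (k + n).descFactorial n := by
    have := Nat.factorial_mul_descFactorial (Nat.le_add_left n k)
    rw [Nat.add_sub_cancel] at this
    exact_mod_cast this.symm
  have hdesc : ((k + n).descFactorial n : K) ≠ 0 := by
    exact_mod_cast Nat.descFactorial_eq_zero_iff_lt.not.mpr (by omega)
  rw [hfac, pow_add]
  field_simp

lemma hasSum_descFactorial_mul_pow_div_factorial (z : ℂ) (n : ℕ) :
    HasSum (fun x : ℕ => (x.descFactorial n : ℂ) * z ^ x / x !) (z ^ n * Complex.exp z) := by
  have hhead : ∑ x ∈ range n, (x.descFactorial n : ℂ) * z ^ x / x ! = 0 :=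
    sum_eq_zero fun x hx => by
      rw [Nat.descFactorial_eq_zero_iff_lt.mpr (mem_range.mp hx), Nat.cast_zero, zero_mul, zero_div]
  rw [← hasSum_nat_add_iff' n, hhead, sub_zero]
  simp_rw [descFactorial_mul_pow_div_factorial_add]
  exact Complex.exp_eq_exp_ℂ ▸ (NormedSpace.expSeries_div_hasSum_exp z).mul_left (z ^ n)

/-- the `n`-th moment of the Christoffel-transformed Charlier weight:
`∑_{x≥0} (x-ω) φ_n(x) z^x/x! = (n+z-ω) z^n e^z`. -/
theorem christoffel_charlier_moment (z ω : ℂ) (n : ℕ) :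
    (∑' x : ℕ, ((x : ℂ) - ω) * fallFac n (x : ℂ) * z ^ x / (x.factorial : ℂ))
      = ((n : ℂ) + z - ω) * z ^ n * Complex.exp z := by
  have hsplit (x : ℕ) : ((x : ℂ) - ω) * fallFac n x * z ^ x / x ! =
      (x.descFactorial (n + 1) : ℂ) * z ^ x / x ! +
        (n - ω) * ((x.descFactorial n : ℂ) * z ^ x / x !) := by
    rw [← fallFac_natCast_s16, ← fallFac_natCast_s16, fallFac_succ]
    ring
  have hsum := (hasSum_descFactorial_mul_pow_div_factorial z (n + 1)).add
    ((hasSum_descFactorial_mul_pow_div_factorial z n).mul_left (n - ω))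
  rw [(hsum.congr_fun hsplit).tsum_eq]
  ring
end

section
/- Let z, M ∈ ℂ and let t ∈ ℂ satisfy t ≠ x and t + 1 ≠ x for every x ∈ ℕ. Define the Stieltjes transform of the Uvarov-modified Charlier weight with mass M at ω = 0 by S_U(t) = ∑_{x=0}^∞ (z^x/x!)·1/(t − x) + M/t. Then (t + 1)·S_U(t + 1) − z·S_U(t) = e^z + M·(1 − z/t). -/
/-!
Since `(t + 1) / (t + 1 - x) = 1 + x / (t + 1 - x)`, the series `(t + 1) S(t + 1)` splits into
the exponential series `∑ z^x/x! = e^z` and `∑ (z^x/x!) x/(t + 1 - x)`; the factor `x` cancels the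
top factor of `x!`, so the latter is `z S(t)` shifted by one index. The point mass only contributes
`(t + 1) M/(t + 1) - z M/t = M (1 - z/t)`.
-/

open Filter Topology Asymptotics Nat

theorem summable_mul_of_isBigO_one {a b : ℕ → ℂ} (ha : Summable a)
    (hb : b =O[atTop] (fun _ => (1 : ℂ))) : Summable fun n => a n * b n :=
  summable_of_isBigO_nat' ha (by simpa using (isBigO_refl a atTop).mul hb)

theorem tendsto_inv_const_sub_natCast (t : ℂ) :
    Tendsto (fun n : ℕ => (t - n)⁻¹) atTop (𝓝 0) :=
  tendsto_inv₀_cobounded.comp <|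
    (tendsto_const_sub_cobounded t).comp tendsto_natCast_atTop_cobounded

theorem summable_pow_div_factorial_mul_one_div_sub (z t : ℂ) :
    Summable fun n : ℕ => z ^ n / n ! * (1 / (t - n)) := by
  simp only [one_div]
  exact summable_mul_of_isBigO_one (NormedSpace.expSeries_div_summable z)
    ((tendsto_inv_const_sub_natCast t).isBigO_one ℂ)

theorem pow_succ_div_factorial_succ_mul (z : ℂ) (n : ℕ) :
    z ^ (n + 1) / (n + 1)! * (n + 1 : ℕ) = z * (z ^ n / n !) := by
  push_cast [Nat.factorial_succ]
  field_simp
  ring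

theorem hasSum_pow_div_factorial_mul_natCast_mul {z s : ℂ} {g : ℕ → ℂ}
    (hg : HasSum (fun n => z ^ n / n ! * g (n + 1)) s) :
    HasSum (fun n => z ^ n / n ! * (n * g n)) (z * s) := by
  refine (hasSum_nat_add_iff' 1).mp ?_
  simp only [Finset.sum_range_one, CharP.cast_eq_zero, zero_mul, mul_zero, sub_zero]
  refine (hg.mul_left z).congr_fun fun n => ?_
  rw [← mul_assoc, pow_succ_div_factorial_succ_mul, mul_assoc]

theorem mul_tsum_charlier_succ (z t : ℂ) (ht : ∀ n : ℕ, t + 1 ≠ n) :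
    (t + 1) * ∑' n : ℕ, z ^ n / n ! * (1 / (t + 1 - n))
      = Complex.exp z + z * ∑' n : ℕ, z ^ n / n ! * (1 / (t - n)) := by
  have hsplit : ∀ n : ℕ, (t + 1) * (z ^ n / n ! * (1 / (t + 1 - n)))
      = z ^ n / n ! + z ^ n / n ! * (n * (1 / (t + 1 - n))) := by
    intro n
    have : t + 1 - n ≠ 0 := sub_ne_zero.2 (ht n)
    field_simp
    ring
  have hexp : HasSum (fun n : ℕ => z ^ n / n !) (Complex.exp z) := by
    rw [Complex.exp_eq_exp_ℂ]
    exact NormedSpace.expSeries_div_hasSum_exp z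
  have hshift : HasSum (fun n : ℕ => z ^ n / n ! * (n * (1 / (t + 1 - n))))
      (z * ∑' n : ℕ, z ^ n / n ! * (1 / (t - n))) := by
    refine hasSum_pow_div_factorial_mul_natCast_mul ?_
    simpa only [Nat.cast_succ, add_sub_add_right_eq_sub]
      using (summable_pow_div_factorial_mul_one_div_sub z t).hasSum
  rw [← tsum_mul_left]
  exact ((hexp.add hshift).congr_fun hsplit).tsum_eq

theorem uvarov_charlier_stieltjes_general (z M t : ℂ)
    (ht1 : ∀ x : ℕ, t + 1 ≠ (x : ℂ)) :
    (t + 1) * ((∑' x : ℕ, z ^ x / (x.factorial : ℂ) * (1 / (t + 1 - (x : ℂ)))) + M / (t + 1))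
      - z * ((∑' x : ℕ, z ^ x / (x.factorial : ℂ) * (1 / (t - (x : ℂ)))) + M / t)
      = Complex.exp z + M * (1 - z / t) := by
  have ht0 : t + 1 ≠ 0 := by simpa using ht1 0
  rw [mul_add, mul_tsum_charlier_succ z t ht1, mul_div_cancel₀ M ht0]
  ring

/-- the Stieltjes transform
`S_U(t) = ∑_{x≥0} (z^x/x!)/(t-x) + M/t` of the Uvarov-modified Charlier weight with mass
`M` at `ω = 0` satisfies `(t+1) S_U(t+1) - z S_U(t) = e^z + M (1 - z/t)`. -/
theorem uvarov_charlier_stieltjes (z M t : ℂ)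
    (ht : ∀ x : ℕ, t ≠ (x : ℂ)) (ht1 : ∀ x : ℕ, t + 1 ≠ (x : ℂ)) :
    (t + 1) * ((∑' x : ℕ, z ^ x / (x.factorial : ℂ) * (1 / (t + 1 - (x : ℂ)))) + M / (t + 1))
      - z * ((∑' x : ℕ, z ^ x / (x.factorial : ℂ) * (1 / (t - (x : ℂ)))) + M / t)
      = Complex.exp z + M * (1 - z / t) :=
  uvarov_charlier_stieltjes_general z M t ht1
end
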